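/- Let k ≤ n be nonnegative integers with n ≥ 1. Then in the ring of formal power series in z with coefficients in ℚ[x₁^{±1},…,x_k^{±1}][x_{k+1},…,xₙ] one has Σ_{l≥0} Q^{(k,n−k)}_{(l)}(x₁,…,xₙ) z^l = Π_{i=1}^k ((1+x_i z)(1+x_i^{−1}z)) / ((1−x_i z)(1−x_i^{−1}z)) · Π_{j=k+1}^n (1+x_j z)/(1−x_j z), where (1−x_i z), (1−x_i^{−1}z), (1−x_j z) are invertible as power series and Q^{(k,n−k)}_{(l)} denotes the intermediate symplectic Q-polynomial of the one-row strict partition (l), with Q^{(k,n−k)}_{(0)} := 1. -/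

import Mathlib

open MvPolynomial

noncomputable section

abbrev SymF : Type := MvPolynomial ℕ ℚ

/-- A partition, as a weakly decreasing function `ℕ → ℕ` (0-indexed parts)
that eventually vanishes. -/
structure Partn where
  part : ℕ → ℕ
  antitone' : ∀ i, part (i + 1) ≤ part i
  exists_zero : ∃ N, part N = 0

/-- The length (number of nonzero parts) of a partition. -/
def Partn.len (l : Partn) : ℕ := Nat.find l.exists_zero

/-- Containment of partitions (of their Young diagrams). -/
def Partn.Sub (mu lam : Partn) : Prop := ∀ i, mu.part i ≤ lam.part i

/-- The empty partition. -/
def Partn.empty : Partn := ⟨fun _ => 0, fun _ => le_rfl, ⟨0, rfl⟩⟩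

/-- A strict partition: strictly decreasing positive parts. -/
structure SPartn where
  part : ℕ → ℕ
  strict' : ∀ i, part (i + 1) ≠ 0 → part (i + 1) < part i
  exists_zero : ∃ N, part N = 0

/-- The length (number of nonzero parts) of a strict partition. -/
def SPartn.len (l : SPartn) : ℕ := Nat.find l.exists_zero

/-- Containment of strict partitions. -/
def SPartn.Sub (mu lam : SPartn) : Prop := ∀ i, mu.part i ≤ lam.part i

/-- The empty strict partition. -/
def SPartn.empty : SPartn := ⟨fun _ => 0, fun _ h => absurd rfl h, ⟨0, rfl⟩⟩

/-- The one-row strict partition `(a)`. -/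
def SPartn.single (a : ℕ) : SPartn :=
  ⟨fun i => if i = 0 then a else 0,
   fun i h => absurd (if_neg (Nat.succ_ne_zero i)) h, ⟨1, rfl⟩⟩

/-- The two-row strict partition `(a, b)` with `b < a` (allowing `b = 0`). -/
def SPartn.two (a b : ℕ) (h : b < a) : SPartn :=
  ⟨fun i => if i = 0 then a else if i = 1 then b else 0,
   by
    intro i hi
    match i with
    | 0 => simpa using h
    | (n+1) => simp at hi,
   ⟨2, rfl⟩⟩

/-- Parts of a strict partition are strictly decreasing within its length. -/
theorem SPartn.part_lt (s : SPartn) {i j : ℕ} (hij : i < j) (hj : j < s.len) :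
    s.part j < s.part i := by
  have hjne : s.part j ≠ 0 := Nat.find_min s.exists_zero hj
  have key : ∀ d i, s.part (i + d + 1) ≠ 0 → s.part (i + d + 1) < s.part i := by
    intro d
    induction d with
    | zero => intro i hI; simpa using s.strict' i (by simpa using hI)
    | succ d ih =>
      intro i hI
      have h1 : s.part (i + d + 1 + 1) < s.part (i + d + 1) := s.strict' (i + d + 1) hI
      have h2 : s.part (i + d + 1) ≠ 0 := by omega
      exact lt_trans h1 (ih i h2)
  have hj' : i + (j - i - 1) + 1 = j := by omega
  rw [← hj'] at hjne ⊢
  exact key _ i hjne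


noncomputable section


/-- `q_r ∈ Λ`, determined by `q_0 = 1` and the recursion
`r·q_r = 2·Σ_{1 ≤ i ≤ r, i odd} p_i·q_{r−i}` (here `X i` is `p_{i+1}`). -/
def qSym : ℕ → SymF
  | 0 => 1
  | (r + 1) =>
      (((r : ℚ) + 1))⁻¹ • (2 * ∑ i ∈ Finset.range (r + 1),
        if Odd (i + 1) then X i * qSym (r - i) else 0)
  decreasing_by exact Nat.lt_succ_of_le (Nat.sub_le r i)

/-- `q_r` for `r ∈ ℤ`, with `q_r = 0` for `r < 0`. -/
def qZ (z : ℤ) : SymF := if 0 ≤ z then qSym z.toNat else 0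

/-- `h_r ∈ Λ`, determined by `h_0 = 1` and the Newton recursion
`r·h_r = Σ_{i=1}^r p_i·h_{r−i}` (here `X i` is `p_{i+1}`). -/
def hSym : ℕ → SymF
  | 0 => 1
  | (r + 1) =>
      (((r : ℚ) + 1))⁻¹ • (∑ i ∈ Finset.range (r + 1), X i * hSym (r - i))
  decreasing_by exact Nat.lt_succ_of_le (Nat.sub_le r i)

/-- `h_r` for `r ∈ ℤ`, with `h_r = 0` for `r < 0`. -/
def hZ (z : ℤ) : SymF := if 0 ≤ z then hSym z.toNat else 0

/-- `Q^A_{(r,s)}` for `r > s`. -/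
def QA2core (r s : ℕ) : SymF :=
  qSym r * qSym s +
    2 * ∑ t ∈ Finset.Icc 1 s, (-1 : SymF) ^ t * (qZ ((r : ℤ) + t) * qZ ((s : ℤ) - t))

/-- Schur's `Q`-function of a two-row diagram, `Q^A_{(r,s)}`, with the conventions
`Q^A_{(r,0)} = q_r`, `Q^A_{(r,r)} = 0`, `Q^A_{(s,r)} = −Q^A_{(r,s)}`. -/
def QA2 (r s : ℕ) : SymF :=
  if s < r then QA2core r s else if r < s then -QA2core s r else 0

/-- `Q^C_{(r,s)}` for `r > s`. -/
def QC2core (r s : ℕ) : SymF :=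
  qSym r * qSym s +
    2 * ∑ t ∈ Finset.Icc 1 s, (-1 : SymF) ^ t *
      ((qZ ((r : ℤ) + t) + 2 * (∑ i ∈ Finset.Icc 1 (t - 1), qZ ((r : ℤ) + t - 2 * i))
          + qZ ((r : ℤ) - t)) * qZ ((s : ℤ) - t))

/-- The symplectic `Q`-function of a two-row diagram, `Q^C_{(r,s)}`, with the same
conventions as in the type `A` case. -/
def QC2 (r s : ℕ) : SymF :=
  if s < r then QC2core r s else if r < s then -QC2core s r else 0

/-- The Pfaffian `Pf(B) = (2^m m!)⁻¹ Σ_σ sgn(σ) Π_t B_{σ(2t−1),σ(2t)}`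
of an `N × N` matrix (intended for skew-symmetric `B` with `N` even, `N = 2m`). -/
def Pf {R : Type*} [CommRing R] [Algebra ℚ R] {N : ℕ}
    (B : Matrix (Fin N) (Fin N) R) : R :=
  (((2 : ℚ) ^ (N / 2) * (N / 2).factorial))⁻¹ •
    ∑ σ : Equiv.Perm (Fin N),
      ((Equiv.Perm.sign σ : ℤˣ) : ℤ) •
        ∏ t ∈ (Finset.range (N / 2)).attach,
          B (σ ⟨2 * t.1, by have := Finset.mem_range.mp t.2; omega⟩)
            (σ ⟨2 * t.1 + 1, by have := Finset.mem_range.mp t.2; omega⟩)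

/-- The skew `Q`-function `Q^X_{λ/μ}` (for `X = A, C` according to the two-row
function `Q2`), defined as the Pfaffian of the block matrix
`[[M^X_λ, N_{λ,μ}], [−N_{λ,μ}ᵀ, O]]`, where `μ` is padded with a zero part
whenever `ℓ(λ) + ℓ(μ)` is odd. -/
def skewQ (Q2 : ℕ → ℕ → SymF) (lam mu : SPartn) : SymF :=
  let l := lam.len
  let m := if Even (l + mu.len) then mu.len else mu.len + 1
  Pf (N := l + m) (Matrix.of fun i j =>
    if _hi : (i : ℕ) < l then
      if _hj : (j : ℕ) < l then Q2 (lam.part i) (lam.part j)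
      else qZ ((lam.part i : ℤ) - mu.part (m - 1 - ((j : ℕ) - l)))
    else
      if _hj : (j : ℕ) < l then - qZ ((lam.part j : ℤ) - mu.part (m - 1 - ((i : ℕ) - l)))
      else 0)

/-- The skew Schur `Q`-function `Q^A_{λ/μ}`. -/
def QAskew (lam mu : SPartn) : SymF := skewQ QA2 lam mu

/-- The skew symplectic `Q`-function `Q^C_{λ/μ}`. -/
def QCskew (lam mu : SPartn) : SymF := skewQ QC2 lam mu

/-- Laurent polynomials in `k` variables. -/
abbrev Laur (k : ℕ) : Type := AddMonoidAlgebra ℚ (Fin k →₀ ℤ)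

/-- The Laurent monomial `x_i ^ z`. -/
def lX {k : ℕ} (i : Fin k) (z : ℤ) : Laur k :=
  AddMonoidAlgebra.single (Finsupp.single i z) 1

/-- `π_A^{(n)} : Λ → ℚ[x₁,…,xₙ]`, `p_r ↦ x₁^r + ⋯ + xₙ^r`. -/
def piA (n : ℕ) : SymF →ₐ[ℚ] MvPolynomial (Fin n) ℚ :=
  aeval fun r => ∑ i : Fin n, X i ^ (r + 1)

/-- `π_C^{(n)} : Λ → ℚ[x₁^{±1},…,xₙ^{±1}]`, `p_r ↦ Σ (x_i^r + x_i^{-r})`. -/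
def piC (n : ℕ) : SymF →ₐ[ℚ] Laur n :=
  aeval fun r => ∑ i : Fin n, (lX i ((r : ℤ) + 1) + lX i (-((r : ℤ) + 1)))

/-- `ℚ[x₁^{±1},…,x_k^{±1}][x_{k+1},…,xₙ]` (with `m = n − k` type-`A` variables). -/
abbrev IRing (k m : ℕ) : Type := MvPolynomial (Fin m) (Laur k)

/-- `π_A^{(n-k)}` with the variables renamed `x_{k+1}, …, x_n`, landing in
`ℚ[x₁^{±1},…,x_k^{±1}][x_{k+1},…,xₙ]`: `p_r ↦ x_{k+1}^r + ⋯ + x_n^r`. -/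
def piAupper (k n : ℕ) : SymF →ₐ[ℚ] IRing k (n - k) :=
  aeval fun r => ∑ j : Fin (n - k), (X j : IRing k (n - k)) ^ (r + 1)

open scoped Classical in
/-- The intermediate symplectic `Q`-polynomial
`Q^{(k,n−k)}_{λ/μ}(x₁,…,xₙ) = Σ_ν π_C^{(k)}(Q^C_{ν/μ}) · π_A^{(n−k)}(Q^A_{λ/ν})`,
the sum being over all strict partitions `ν` with `μ ⊆ ν ⊆ λ`. -/
def interQ (k n : ℕ) (lam mu : SPartn) : IRing k (n - k) :=
  ∑ᶠ (ν : SPartn) (_ : mu.Sub ν ∧ ν.Sub lam),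
    C (piC k (QCskew ν mu)) * piAupper k n (QAskew lam ν)

/-- The one-row intermediate symplectic `Q`-polynomial `Q^{(k,n−k)}_{(l)}`,
with `Q^{(k,n−k)}_{(0)} := 1`. -/
def interQrow (k n : ℕ) (l : ℕ) : IRing k (n - k) :=
  if l = 0 then 1 else interQ k n (SPartn.single l) SPartn.empty
section AuxPS
open PowerSeries
variable {A : Type*} [CommRing A]

private def geomS (a : A) : PowerSeries A := PowerSeries.mk fun n => a ^ n
private def GevenS (a : A) : PowerSeries A :=
  PowerSeries.mk fun n => if Even n then a ^ n else 0
private def pserS (a : A) : PowerSeries A :=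
  PowerSeries.mk fun n => if Odd n then 2 * a ^ n else 0

private lemma one_sub_mul_geomS (a : A) :
    (1 - PowerSeries.C a * PowerSeries.X) * geomS a = 1 := by
  ext n
  rw [sub_mul, one_mul, map_sub, mul_assoc, PowerSeries.coeff_C_mul]
  rcases n with _ | n
  · simp [geomS, PowerSeries.coeff_zero_X_mul]
  · rw [PowerSeries.coeff_succ_X_mul, PowerSeries.coeff_one]
    simp [geomS, pow_succ, mul_comm]

private lemma invOfUnit_eq_geomS (a : A) :
    PowerSeries.invOfUnit (1 - PowerSeries.C a * PowerSeries.X) 1 = geomS a := by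
  have h0 : PowerSeries.constantCoeff (1 - PowerSeries.C a * PowerSeries.X)
      = ((1 : Aˣ) : A) := by simp
  have h := PowerSeries.mul_invOfUnit (1 - PowerSeries.C a * PowerSeries.X) 1 h0
  calc PowerSeries.invOfUnit (1 - PowerSeries.C a * PowerSeries.X) 1
      = ((1 - PowerSeries.C a * PowerSeries.X) * geomS a) *
        PowerSeries.invOfUnit (1 - PowerSeries.C a * PowerSeries.X) 1 := by
        rw [one_sub_mul_geomS, one_mul]
    _ = geomS a * ((1 - PowerSeries.C a * PowerSeries.X) *
        PowerSeries.invOfUnit (1 - PowerSeries.C a * PowerSeries.X) 1) := by ring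
    _ = geomS a := by rw [h, mul_one]

private lemma GevenS_mul (a : A) :
    GevenS a * (1 + PowerSeries.C a * PowerSeries.X) = geomS a := by
  ext n
  rw [mul_add, mul_one, map_add, mul_comm (GevenS a) (PowerSeries.C a * PowerSeries.X),
    mul_assoc, PowerSeries.coeff_C_mul]
  rcases n with _ | n
  · simp [GevenS, geomS, PowerSeries.coeff_zero_X_mul]
  · rw [PowerSeries.coeff_succ_X_mul]
    simp only [GevenS, geomS, PowerSeries.coeff_mk]
    rcases Nat.even_or_odd n with h | h
    · rw [if_neg (by simp [Nat.even_add_one, h]), if_pos h, zero_add, pow_succ, mul_comm]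
    · rw [if_pos (by simp [Nat.even_add_one, Nat.not_even_iff_odd.mpr h]),
        if_neg (Nat.not_even_iff_odd.mpr h), mul_zero, add_zero]

private lemma pserS_eq (a : A) :
    pserS a = 2 * (PowerSeries.C a * PowerSeries.X) * GevenS a := by
  ext n
  rw [mul_assoc, mul_assoc, two_mul, map_add, PowerSeries.coeff_C_mul]
  rcases n with _ | n
  · simp [pserS, PowerSeries.coeff_zero_X_mul]
  · rw [PowerSeries.coeff_succ_X_mul]
    simp only [pserS, GevenS, PowerSeries.coeff_mk]
    rcases Nat.even_or_odd n with h | h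
    · rw [if_pos h, if_pos (by simp [Nat.odd_add_one, h]), pow_succ]
      ring
    · rw [if_neg (Nat.not_even_iff_odd.mpr h),
        if_neg (by simp [Nat.odd_add_one, Nat.not_even_iff_odd.mpr h]), mul_zero, add_zero]

private def Dps (F : PowerSeries A) : PowerSeries A :=
  PowerSeries.mk fun n => n • PowerSeries.coeff n F

private lemma coeff_Dps (F : PowerSeries A) (n : ℕ) :
    PowerSeries.coeff n (Dps F) = n • PowerSeries.coeff n F := PowerSeries.coeff_mk _ _

private lemma Dps_one_add_CX (a : A) :
    Dps (1 + PowerSeries.C a * PowerSeries.X) = PowerSeries.C a * PowerSeries.X := by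
  ext n
  rw [coeff_Dps, map_add, PowerSeries.coeff_one, PowerSeries.coeff_C_mul, PowerSeries.coeff_X]
  rcases n with _ | _ | n <;> simp

private lemma Dps_one_sub_CX (a : A) :
    Dps (1 - PowerSeries.C a * PowerSeries.X) = -(PowerSeries.C a * PowerSeries.X) := by
  ext n
  rw [coeff_Dps, map_sub, map_neg, PowerSeries.coeff_one, PowerSeries.coeff_C_mul,
    PowerSeries.coeff_X]
  rcases n with _ | _ | n <;> simp

private lemma Dps_mul (F G : PowerSeries A) : Dps (F * G) = Dps F * G + F * Dps G := by
  ext n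
  rw [map_add, coeff_Dps, PowerSeries.coeff_mul, PowerSeries.coeff_mul, PowerSeries.coeff_mul,
    Finset.smul_sum, ← Finset.sum_add_distrib]
  refine Finset.sum_congr rfl fun p hp => ?_
  rw [Finset.HasAntidiagonal.mem_antidiagonal] at hp
  rw [coeff_Dps, coeff_Dps, smul_mul_assoc, mul_smul_comm, ← hp, add_smul]

private lemma Dps_one : Dps (1 : PowerSeries A) = 0 := by
  ext n
  rw [coeff_Dps, map_zero, PowerSeries.coeff_one]
  rcases n with _ | n <;> simp

private lemma Dps_prod {ι : Type*} [DecidableEq ι] (t : Finset ι) (f P : ι → PowerSeries A)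
    (h : ∀ i ∈ t, Dps (f i) = P i * f i) :
    Dps (∏ i ∈ t, f i) = (∑ i ∈ t, P i) * ∏ i ∈ t, f i := by
  induction t using Finset.induction_on with
  | empty => simp [Dps_one]
  | @insert a t ha ih =>
    rw [Finset.prod_insert ha, Finset.sum_insert ha, Dps_mul,
      h a (Finset.mem_insert_self a t), ih (fun i hi => h i (Finset.mem_insert_of_mem hi))]
    ring

private lemma Dps_geomS (a : A) :
    Dps (geomS a) = PowerSeries.C a * PowerSeries.X * (geomS a * geomS a) := by
  have h1 := one_sub_mul_geomS a
  have h2 : Dps ((1 - PowerSeries.C a * PowerSeries.X) * geomS a) = 0 := by rw [h1, Dps_one]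
  rw [Dps_mul, Dps_one_sub_CX, neg_mul] at h2
  have h3 : (1 - PowerSeries.C a * PowerSeries.X) * Dps (geomS a)
      = PowerSeries.C a * PowerSeries.X * geomS a := by linear_combination h2
  calc Dps (geomS a)
      = ((1 - PowerSeries.C a * PowerSeries.X) * geomS a) * Dps (geomS a) := by
        rw [h1, one_mul]
    _ = geomS a * ((1 - PowerSeries.C a * PowerSeries.X) * Dps (geomS a)) := by ring
    _ = _ := by rw [h3]; ring

private lemma Dps_factor (a : A) :
    Dps ((1 + PowerSeries.C a * PowerSeries.X) * geomS a)
      = pserS a * ((1 + PowerSeries.C a * PowerSeries.X) * geomS a) := by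
  rw [Dps_mul, Dps_one_add_CX, Dps_geomS, pserS_eq]
  have h := GevenS_mul a
  calc PowerSeries.C a * PowerSeries.X * geomS a + (1 + PowerSeries.C a * PowerSeries.X) *
        (PowerSeries.C a * PowerSeries.X * (geomS a * geomS a))
      = PowerSeries.C a * PowerSeries.X * geomS a *
        (1 + (1 + PowerSeries.C a * PowerSeries.X) * geomS a) := by ring
    _ = PowerSeries.C a * PowerSeries.X * geomS a *
        ((1 - PowerSeries.C a * PowerSeries.X) * geomS a +
         (1 + PowerSeries.C a * PowerSeries.X) * geomS a) := by rw [one_sub_mul_geomS]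
    _ = 2 * (PowerSeries.C a * PowerSeries.X) * geomS a * geomS a := by ring
    _ = 2 * (PowerSeries.C a * PowerSeries.X) *
        (GevenS a * (1 + PowerSeries.C a * PowerSeries.X)) * geomS a := by rw [h]
    _ = _ := by ring

private lemma ode_unique [Algebra ℚ A] (P F G : PowerSeries A)
    (hP : PowerSeries.constantCoeff P = 0)
    (hF : Dps F = P * F) (hG : Dps G = P * G)
    (h0 : PowerSeries.coeff 0 F = PowerSeries.coeff 0 G) : F = G := by
  ext n
  induction n using Nat.strong_induction_on with
  | _ n ih =>
    rcases n with _ | m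
    · exact h0
    · have e1 : (m+1) • PowerSeries.coeff (m+1) F = (m+1) • PowerSeries.coeff (m+1) G := by
        rw [← coeff_Dps, ← coeff_Dps, hF, hG, PowerSeries.coeff_mul, PowerSeries.coeff_mul]
        refine Finset.sum_congr rfl fun p hp => ?_
        rw [Finset.HasAntidiagonal.mem_antidiagonal] at hp
        rcases Nat.eq_zero_or_pos p.1 with h | h
        · rw [h, PowerSeries.coeff_zero_eq_constantCoeff, hP, zero_mul, zero_mul]
        · rw [ih p.2 (by omega)]
      rw [← Nat.cast_smul_eq_nsmul ℚ, ← Nat.cast_smul_eq_nsmul ℚ] at e1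
      have e2 := congrArg (fun x => (((m+1 : ℕ) : ℚ))⁻¹ • x) e1
      have h3 : ((m:ℚ)+1)⁻¹ * ((m:ℚ)+1) = 1 := inv_mul_cancel₀ (by positivity)
      simpa [smul_smul, h3] using e2

variable [Algebra ℚ A] {ι : Type*} [Fintype ι]

private def PserS (s : ι → A) : PowerSeries A :=
  PowerSeries.mk fun m => if Odd m then 2 * ∑ i : ι, s i ^ m else 0

private lemma PserS_sum (s : ι → A) : PserS s = ∑ i : ι, pserS (s i) := by
  ext n
  rw [map_sum]
  simp only [PserS, pserS, PowerSeries.coeff_mk]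
  split_ifs with h
  · rw [Finset.mul_sum]
  · simp

private lemma Dps_Qside (s : ι → A) :
    Dps (PowerSeries.mk fun r => aeval (fun m => ∑ i : ι, s i ^ (m+1)) (qSym r)) =
      PserS s * PowerSeries.mk fun r => aeval (fun m => ∑ i : ι, s i ^ (m+1)) (qSym r) := by
  set φ : SymF →ₐ[ℚ] A := aeval (fun m => ∑ i : ι, s i ^ (m+1)) with hφ
  ext n
  rw [coeff_Dps, PowerSeries.coeff_mk, PowerSeries.coeff_mul,
    Finset.Nat.sum_antidiagonal_eq_sum_range_succ_mk, Finset.sum_range_succ']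
  have hz : (PowerSeries.coeff (0, n - 0).1) (PserS s) *
      (PowerSeries.coeff (0, n - 0).2) (PowerSeries.mk fun r => φ (qSym r)) = 0 := by
    simp [PserS]
  rw [hz, add_zero]
  rcases n with _ | r
  · simp
  · have hq : qSym (r+1) = (((r : ℚ) + 1))⁻¹ • (2 * ∑ i ∈ Finset.range (r + 1),
        if Odd (i + 1) then X i * qSym (r - i) else 0) := by rw [qSym]
    rw [hq, map_smul, ← Nat.cast_smul_eq_nsmul ℚ, smul_smul]
    have hc : ((r + 1 : ℕ) : ℚ) * (((r : ℚ) + 1))⁻¹ = 1 := by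
      push_cast
      field_simp
    rw [hc, one_smul, map_mul, map_ofNat, map_sum]
    rw [Finset.mul_sum]
    refine Finset.sum_congr rfl fun i hi => ?_
    rw [Finset.mem_range] at hi
    have hri : r + 1 - (i + 1) = r - i := by omega
    simp only [PserS, PowerSeries.coeff_mk, hri, apply_ite φ, map_zero, map_mul, hφ, aeval_X]
    split_ifs with h
    · simp only [map_mul, aeval_X]; ring
    · simp

private theorem mainGF (s : ι → A) :
    (PowerSeries.mk fun r => aeval (fun m => ∑ i : ι, s i ^ (m+1)) (qSym r)) =
      ∏ i : ι, ((1 + PowerSeries.C (s i) * PowerSeries.X) *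
        PowerSeries.invOfUnit (1 - PowerSeries.C (s i) * PowerSeries.X) 1) := by
  classical
  have hfac : ∀ i : ι, (1 + PowerSeries.C (s i) * PowerSeries.X) *
        PowerSeries.invOfUnit (1 - PowerSeries.C (s i) * PowerSeries.X) 1
      = (1 + PowerSeries.C (s i) * PowerSeries.X) * geomS (s i) := fun i => by
    rw [invOfUnit_eq_geomS]
  rw [Finset.prod_congr rfl fun i _ => hfac i]
  refine ode_unique (PserS s) _ _ ?_ (Dps_Qside s) ?_ ?_
  · simp [PserS]
  · rw [Dps_prod Finset.univ (fun i => (1 + PowerSeries.C (s i) * PowerSeries.X) * geomS (s i))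
      (fun i => pserS (s i)) (fun i _ => Dps_factor (s i)), PserS_sum]
  · rw [PowerSeries.coeff_mk]
    have h0 : qSym 0 = 1 := by rw [qSym]
    rw [h0, map_one, PowerSeries.coeff_zero_eq_constantCoeff, map_prod]
    have hcc : ∀ i : ι, PowerSeries.constantCoeff
        ((1 + PowerSeries.C (s i) * PowerSeries.X) * geomS (s i)) = 1 := by
      intro i
      rw [map_mul, map_add]
      simp [geomS, ← PowerSeries.coeff_zero_eq_constantCoeff]
    rw [Finset.prod_congr rfl fun i _ => hcc i, Finset.prod_const_one]

end AuxPS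
section AuxComb
open scoped Classical

private lemma SPartn.ext' {a b : SPartn} (h : a.part = b.part) : a = b := by
  cases a; cases b; dsimp at h; subst h; rfl

private lemma SPartn.single_zero : SPartn.single 0 = SPartn.empty := by
  apply SPartn.ext'
  funext i
  simp [SPartn.single, SPartn.empty]

private lemma SPartn.len_single {r : ℕ} (hr : r ≠ 0) : (SPartn.single r).len = 1 := by
  rw [SPartn.len, Nat.find_eq_iff]
  refine ⟨rfl, ?_⟩
  intro m hm
  interval_cases m
  simpa [SPartn.single] using hr

private lemma SPartn.len_empty : SPartn.empty.len = 0 := by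
  rw [SPartn.len, Nat.find_eq_zero]
  rfl

private lemma Pf_zero {R : Type*} [CommRing R] [Algebra ℚ R] (B : Matrix (Fin 0) (Fin 0) R) :
    Pf B = 1 := by
  have huniv : (Finset.univ : Finset (Equiv.Perm (Fin 0))) = {1} := by decide
  rw [Pf, huniv, Finset.sum_singleton]
  have hat : (Finset.range (0 / 2)).attach = ∅ := rfl
  rw [hat, Finset.prod_empty]
  norm_num

private lemma Pf_two {R : Type*} [CommRing R] [Algebra ℚ R] (B : Matrix (Fin 2) (Fin 2) R) :
    Pf B = (2 : ℚ)⁻¹ • (B 0 1 - B 1 0) := by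
  have huniv : (Finset.univ : Finset (Equiv.Perm (Fin 2))) = {1, Equiv.swap 0 1} := by decide
  have hne : (1 : Equiv.Perm (Fin 2)) ∉ ({Equiv.swap 0 1} : Finset (Equiv.Perm (Fin 2))) := by
    decide
  rw [Pf, huniv, Finset.sum_insert hne, Finset.sum_singleton]
  have hsign : Equiv.Perm.sign (Equiv.swap (0 : Fin 2) 1) = -1 :=
    Equiv.Perm.sign_swap (by decide)
  have hat : (Finset.range (2 / 2)).attach = {⟨0, by decide⟩} := by decide
  rw [hat, Finset.prod_singleton, Finset.prod_singleton]
  rw [hsign, map_one]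
  have h0 : (⟨2 * 0, by omega⟩ : Fin 2) = 0 := rfl
  have h1 : (⟨2 * 0 + 1, by omega⟩ : Fin 2) = 1 := rfl
  rw [h0, h1]
  simp only [Equiv.Perm.one_apply, Equiv.swap_apply_left, Equiv.swap_apply_right]
  norm_num [sub_eq_add_neg]

private lemma qSym_zero : qSym 0 = 1 := by rw [qSym]

private lemma qZ_coe_sub {r s : ℕ} (hs : s ≤ r) : qZ ((r : ℤ) - (s : ℤ)) = qSym (r - s) := by
  rw [qZ, if_pos (by omega)]
  congr 1
  omega

private lemma skewQ_empty_empty (Q2 : ℕ → ℕ → SymF) :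
    skewQ Q2 SPartn.empty SPartn.empty = 1 := by
  simp only [skewQ]
  generalize hL : SPartn.empty.len = L
  have hL1 : L = 0 := by rw [← hL, SPartn.len_empty]
  subst hL1
  generalize hM : (if Even (0 + SPartn.empty.len) then SPartn.empty.len
    else SPartn.empty.len + 1) = M
  have hM1 : M = 0 := by rw [← hM, SPartn.len_empty]; norm_num
  subst hM1
  exact Pf_zero _

private lemma Pf_one_add_one {R : Type*} [CommRing R] [Algebra ℚ R]
    (B : Matrix (Fin (1+1)) (Fin (1+1)) R) : Pf B = (2 : ℚ)⁻¹ • (B 0 1 - B 1 0) :=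
  Pf_two B

private lemma skewQ_single (Q2 : ℕ → ℕ → SymF) (r s : ℕ)
    (hr : r ≠ 0) (hs : s ≤ r) :
    skewQ Q2 (SPartn.single r) (SPartn.single s) = qSym (r - s) := by
  have key : ∀ (mu : SPartn), mu.len = 1 ∨ mu.len = 0 → mu.part 0 = s →
      skewQ Q2 (SPartn.single r) mu = qSym (r - s) := by
    intro mu hml hmp
    simp only [skewQ]
    generalize hL : (SPartn.single r).len = L
    have hL1 : L = 1 := by rw [← hL, SPartn.len_single hr]
    subst hL1
    generalize hM : (if Even (1 + mu.len) then mu.len else mu.len + 1) = M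
    have hM1 : M = 1 := by
      rcases hml with hml | hml <;> rw [← hM, hml] <;> norm_num
    subst hM1
    rw [Pf_one_add_one]
    simp only [Matrix.of_apply]
    norm_num [SPartn.single, hmp]
    rw [← two_smul ℚ, smul_smul]
    norm_num [qZ_coe_sub hs]
  rcases Nat.eq_zero_or_pos s with h0 | hpos
  · subst h0
    refine key _ (Or.inr ?_) rfl
    rw [SPartn.single_zero, SPartn.len_empty]
  · exact key _ (Or.inl (SPartn.len_single (by omega))) rfl

private lemma interQ_single (k n l : ℕ) (hl : l ≠ 0) :
    interQ k n (SPartn.single l) SPartn.empty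
      = ∑ s ∈ Finset.range (l + 1),
          MvPolynomial.C (piC k (qSym s)) * piAupper k n (qSym (l - s)) := by
  classical
  have hset : {ν : SPartn | SPartn.empty.Sub ν ∧ ν.Sub (SPartn.single l)}
      = ↑((Finset.range (l + 1)).image SPartn.single) := by
    ext ν
    simp only [Set.mem_setOf_eq, Finset.coe_image, Set.mem_image, Finset.mem_coe,
      Finset.mem_range]
    constructor
    · rintro ⟨-, h2⟩
      refine ⟨ν.part 0, ?_, ?_⟩
      · have h0 := h2 0
        simp [SPartn.single] at h0
        omega
      · apply SPartn.ext'
        funext i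
        rcases i with _ | i
        · simp [SPartn.single]
        · have hi := h2 (i + 1)
          simp [SPartn.single] at hi ⊢
          omega
    · rintro ⟨s, hs, rfl⟩
      refine ⟨fun i => Nat.zero_le _, fun i => ?_⟩
      simp only [SPartn.single]
      split <;> omega
  have hrfl : interQ k n (SPartn.single l) SPartn.empty
      = ∑ᶠ ν ∈ {ν : SPartn | SPartn.empty.Sub ν ∧ ν.Sub (SPartn.single l)},
          MvPolynomial.C (piC k (QCskew ν SPartn.empty)) *
            piAupper k n (QAskew (SPartn.single l) ν) := rfl
  rw [hrfl, hset, finsum_mem_coe_finset,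
    Finset.sum_image (fun a _ b _ h => by simpa [SPartn.single] using congrArg (·.part 0) h)]
  refine Finset.sum_congr rfl fun s hs => ?_
  rw [Finset.mem_range] at hs
  have hA : QAskew (SPartn.single l) (SPartn.single s) = qSym (l - s) := by
    rw [QAskew, skewQ_single QA2 l s hl (by omega)]
  have hC : QCskew (SPartn.single s) SPartn.empty = qSym s := by
    rcases s with _ | t
    · rw [SPartn.single_zero, QCskew, skewQ_empty_empty, qSym_zero]
    · rw [← SPartn.single_zero, QCskew,
        skewQ_single QC2 (t + 1) 0 (Nat.succ_ne_zero t) (Nat.zero_le _), Nat.sub_zero]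
  rw [hA, hC]

end AuxComb
section AuxFinal

private lemma lX_pow {k : ℕ} (i : Fin k) (c : ℤ) (e : ℕ) : lX i c ^ e = lX i (e * c) := by
  simp [lX, AddMonoidAlgebra.single_pow, Finsupp.smul_single, nsmul_eq_mul]

private lemma C_piC_eq (k m : ℕ) (x : SymF) :
    (MvPolynomial.C (piC k x) : IRing k m) =
      aeval (fun j => ∑ p : Fin k × Bool,
        (MvPolynomial.C (lX p.1 (if p.2 then 1 else -1)) : IRing k m) ^ (j + 1)) x := by
  have h1 : (MvPolynomial.C (piC k x) : IRing k m)
      = ((IsScalarTower.toAlgHom ℚ (Laur k) (IRing k m)).comp (piC k)) x := by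
    rw [AlgHom.coe_comp, Function.comp_apply, IsScalarTower.coe_toAlgHom',
      MvPolynomial.algebraMap_eq]
  rw [h1, piC, MvPolynomial.comp_aeval]
  have hgen : (fun i : ℕ => (IsScalarTower.toAlgHom ℚ (Laur k) (IRing k m))
        (∑ i_1 : Fin k, (lX i_1 ((i : ℤ) + 1) + lX i_1 (-((i : ℤ) + 1)))))
      = fun j => ∑ p : Fin k × Bool,
          (MvPolynomial.C (lX p.1 (if p.2 then 1 else -1)) : IRing k m) ^ (j + 1) := by
    funext r
    rw [map_sum, Fintype.sum_prod_type]
    refine Finset.sum_congr rfl fun i _ => ?_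
    rw [map_add, Fintype.sum_bool]
    simp only [Bool.false_eq_true, if_true, if_false]
    rw [← map_pow, ← map_pow, lX_pow, lX_pow]
    have e1 : ((r + 1 : ℕ) : ℤ) * 1 = (r : ℤ) + 1 := by push_cast; ring
    have e2 : ((r + 1 : ℕ) : ℤ) * (-1) = -((r : ℤ) + 1) := by push_cast; ring
    rw [e1, e2, IsScalarTower.coe_toAlgHom', MvPolynomial.algebraMap_eq]
  rw [hgen]

private lemma mkC_prod (k m : ℕ) :
    (PowerSeries.mk fun r => (MvPolynomial.C (piC k (qSym r)) : IRing k m)) =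
      ∏ i : Fin k,
        ((1 + PowerSeries.C (R := IRing k m) (MvPolynomial.C (lX i 1)) * PowerSeries.X) *
         (1 + PowerSeries.C (R := IRing k m) (MvPolynomial.C (lX i (-1))) * PowerSeries.X) *
         PowerSeries.invOfUnit
           (1 - PowerSeries.C (R := IRing k m) (MvPolynomial.C (lX i 1)) * PowerSeries.X) 1 *
         PowerSeries.invOfUnit
           (1 - PowerSeries.C (R := IRing k m) (MvPolynomial.C (lX i (-1))) * PowerSeries.X) 1) := by
  calc (PowerSeries.mk fun r => (MvPolynomial.C (piC k (qSym r)) : IRing k m))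
      = PowerSeries.mk fun r => aeval (fun j => ∑ p : Fin k × Bool,
          (MvPolynomial.C (lX p.1 (if p.2 then 1 else -1)) : IRing k m) ^ (j + 1)) (qSym r) := by
        simp only [C_piC_eq]
    _ = ∏ p : Fin k × Bool,
        ((1 + PowerSeries.C (R := IRing k m) (MvPolynomial.C (lX p.1 (if p.2 then 1 else -1))) *
          PowerSeries.X) *
         PowerSeries.invOfUnit (1 - PowerSeries.C (R := IRing k m)
           (MvPolynomial.C (lX p.1 (if p.2 then 1 else -1))) * PowerSeries.X) 1) := mainGF _
    _ = _ := by
        rw [Fintype.prod_prod_type]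
        refine Finset.prod_congr rfl fun i _ => ?_
        rw [Fintype.prod_bool]
        simp only [Bool.false_eq_true, if_true, if_false]
        ring

private lemma mkA_prod (k n : ℕ) :
    (PowerSeries.mk fun r => piAupper k n (qSym r)) =
      ∏ j : Fin (n - k),
        ((1 + PowerSeries.C (R := IRing k (n - k)) (MvPolynomial.X j) * PowerSeries.X) *
          PowerSeries.invOfUnit
            (1 - PowerSeries.C (R := IRing k (n - k)) (MvPolynomial.X j) * PowerSeries.X) 1) :=
  mainGF _

private lemma mk_interQrow (k n : ℕ) :
    (PowerSeries.mk fun l => interQrow k n l) =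
      (PowerSeries.mk fun r => (MvPolynomial.C (piC k (qSym r)) : IRing k (n - k))) *
      (PowerSeries.mk fun r => piAupper k n (qSym r)) := by
  ext N
  rw [PowerSeries.coeff_mk, PowerSeries.coeff_mul,
    Finset.Nat.sum_antidiagonal_eq_sum_range_succ_mk]
  simp only [PowerSeries.coeff_mk]
  rcases N with _ | l
  · simp [interQrow, qSym_zero]
  · rw [interQrow, if_neg (Nat.succ_ne_zero l), interQ_single k n (l + 1) (Nat.succ_ne_zero l)]

end AuxFinal

/-- Generating function of the one-row intermediate symplectic `Q`-polynomials:
`Σ_l Q^{(k,n−k)}_{(l)} z^l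
  = Π_{i=1}^k ((1+x_i z)(1+x_i⁻¹z))/((1−x_i z)(1−x_i⁻¹z)) · Π_{j=k+1}^n (1+x_j z)/(1−x_j z)`,
where the inverses of the `1 − x z` are taken in the power series ring
(via `PowerSeries.invOfUnit`, their constant coefficient being the unit `1`). -/
theorem interQrow_generating_function (k n : ℕ) (hkn : k ≤ n) (hn : 1 ≤ n) :
    letI R := IRing k (n - k)
    letI Cc : R →+* PowerSeries R := PowerSeries.C
    letI z : PowerSeries R := PowerSeries.X
    (PowerSeries.mk fun l => interQrow k n l) =
      (∏ i : Fin k,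
        ((1 + Cc (MvPolynomial.C (lX i 1)) * z) *
          (1 + Cc (MvPolynomial.C (lX i (-1))) * z) *
          PowerSeries.invOfUnit (1 - Cc (MvPolynomial.C (lX i 1)) * z) 1 *
          PowerSeries.invOfUnit (1 - Cc (MvPolynomial.C (lX i (-1))) * z) 1)) *
      ∏ j : Fin (n - k),
        ((1 + Cc (MvPolynomial.X j) * z) *
          PowerSeries.invOfUnit (1 - Cc (MvPolynomial.X j) * z) 1) := by
  rw [mk_interQrow k n, mkC_prod k (n - k), mkA_prod k n]

end
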